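/- Let Ψ = Y + θ₋χ₊ + θ₊χ₋ + θ₋θ₊G be a degree-(1,1) superfield in 𝒜_A with smooth A-valued components of degrees deg Y = (1,1), deg χ₊ = (1,0), deg χ₋ = (0,1), deg G = (0,0). Then the coefficient of θ₋θ₊ in the z-degree-zero part of D₋Ψ·D₊Ψ equals −¼∂₋Y∂₊Y + ½χ₋∂₋χ₋ + ½χ₊∂₊χ₊ + G². This is the component Lagrangian of the free Z₂²-graded exotic scalar field theory, in which the exotic boson Y propagates and the ordinary boson G is auxiliary. -/

import Mathlib

noncomputable section

/-- The group `ℤ₂ × ℤ₂`. -/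
abbrev G2 : Type := ZMod 2 × ZMod 2

/-- The standard scalar product on `ℤ₂ × ℤ₂`. -/
def ip (γ γ' : G2) : ZMod 2 := γ.1 * γ'.1 + γ.2 * γ'.2

/-- The Koszul sign `(-1)^x`. -/
def ksign (x : ZMod 2) : ℝ := if x = 0 then 1 else -1

/-- Two-dimensional Minkowski spacetime in light-cone coordinates `(x⁻, x⁺)`. -/
abbrev E2 : Type := ℝ × ℝ

/-- Coefficient families `(k, a, b) ↦ f_{k,a,b}` representing the elements
`Σ_{k,a,b} z^k θ₋^a θ₊^b f_{k,a,b}(x⁻,x⁺)` of the `ℤ₂²`-graded algebra `𝒜_A` of superfields on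
`ℤ₂²`-Minkowski spacetime `ℝ^{2|1,1,1}`. -/
abbrev SF (A : Type*) : Type _ := ℕ → Bool → Bool → (E2 → A)

/-- `Bool → ZMod 2`. -/
def bz (a : Bool) : ZMod 2 := if a then 1 else 0

/-- The `ℤ₂²`-degree of the monomial `z^k θ₋^a θ₊^b`, where `deg z = (1,1)`,
`deg θ₋ = (0,1)` and `deg θ₊ = (1,0)`. -/
def mdeg (k : ℕ) (a b : Bool) : G2 := ((k : ZMod 2) + bz b, (k : ZMod 2) + bz a)

/-- The light-cone partial derivative `∂₋`. -/
def pdm {W : Type*} [NormedAddCommGroup W] [NormedSpace ℝ W] (f : E2 → W) : E2 → W :=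
  fun p => fderiv ℝ f p (1, 0)

/-- The light-cone partial derivative `∂₊`. -/
def pdp {W : Type*} [NormedAddCommGroup W] [NormedSpace ℝ W] (f : E2 → W) : E2 → W :=
  fun p => fderiv ℝ f p (0, 1)

namespace SF

variable {A : Type*} [NormedRing A] [NormedAlgebra ℝ A]

/-- `∂₋` acting coefficientwise on superfields. -/
def Pm (c : SF A) : SF A := fun k a b => pdm (c k a b)

/-- `∂₊` acting coefficientwise on superfields. -/
def Pp (c : SF A) : SF A := fun k a b => pdp (c k a b)

/-- `∂_z`, acting on normal-form monomials by `∂_z(z^k θ₋^a θ₊^b f) = k z^{k-1} θ₋^a θ₊^b f`. -/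
def Pz (c : SF A) : SF A := fun k a b => ((k + 1 : ℕ) : ℝ) • c (k + 1) a b

/-- `∂_{θ₋}`, acting by `∂_{θ₋}(z^k θ₋^a θ₊^b f) = (-1)^k a z^k θ₊^b f`. -/
def Dthm (c : SF A) : SF A := fun k a b => if a then 0 else ((-1 : ℝ) ^ k) • c k true b

/-- `∂_{θ₊}`, acting by `∂_{θ₊}(z^k θ₋^a θ₊^b f) = (-1)^k b z^k θ₋^a f`. -/
def Dthp (c : SF A) : SF A := fun k a b => if b then 0 else ((-1 : ℝ) ^ k) • c k a true

/-- Left multiplication by `θ₋` (recall `z θ₋ = -θ₋ z`). -/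
def Mthm (c : SF A) : SF A := fun k a b => if a then ((-1 : ℝ) ^ k) • c k false b else 0

/-- Left multiplication by `θ₊` (recall `z θ₊ = -θ₊ z`). -/
def Mthp (c : SF A) : SF A := fun k a b => if b then ((-1 : ℝ) ^ k) • c k a false else 0

/-- The supercharge `Q₋ = ∂_{θ₋} + ½ θ₋ ∂₋ − ½ θ₊ ∂_z`. -/
def Qm (c : SF A) : SF A := Dthm c + (1/2 : ℝ) • Mthm (Pm c) - (1/2 : ℝ) • Mthp (Pz c)

/-- The supercharge `Q₊ = ∂_{θ₊} + ½ θ₊ ∂₊ + ½ θ₋ ∂_z`. -/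
def Qp (c : SF A) : SF A := Dthp c + (1/2 : ℝ) • Mthp (Pp c) + (1/2 : ℝ) • Mthm (Pz c)

/-- The SUSY covariant derivative `D₋ = ∂_{θ₋} − ½ θ₋ ∂₋ + ½ θ₊ ∂_z`. -/
def Dm (c : SF A) : SF A := Dthm c - (1/2 : ℝ) • Mthm (Pm c) + (1/2 : ℝ) • Mthp (Pz c)

/-- The SUSY covariant derivative `D₊ = ∂_{θ₊} − ½ θ₊ ∂₊ − ½ θ₋ ∂_z`. -/
def Dp (c : SF A) : SF A := Dthp c - (1/2 : ℝ) • Mthp (Pp c) - (1/2 : ℝ) • Mthm (Pz c)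

end SF

/-- The Koszul sign occurring when forming the normal form of the product
`(z^k θ₋^a θ₊^b f)·(z^l θ₋^{a'} θ₊^{b'} g)`, where the left factor is a coefficient term of a
homogeneous superfield of total `ℤ₂²`-degree `δ` (so that `f` is homogeneous of degree
`δ + mdeg k a b`). -/
def koz (δ : G2) (k : ℕ) (a b : Bool) (l : ℕ) (a' b' : Bool) : ℝ :=
  ksign (ip (δ + mdeg k a b) (mdeg l a' b') + (l : ZMod 2) * (bz a + bz b))

/-- The product of superfields in `𝒜_A`, where `δ` is the total `ℤ₂²`-degree of the
(homogeneous) left factor. -/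
def SF.mul {A : Type*} [NormedRing A] [NormedAlgebra ℝ A] (δ : G2) (c d : SF A) : SF A :=
  fun n e f x =>
    ∑ k ∈ Finset.range (n + 1), ∑ a : Bool, ∑ b : Bool, ∑ a' : Bool, ∑ b' : Bool,
      if (a != a') = e ∧ (a && a') = false ∧ (b != b') = f ∧ (b && b') = false then
        koz δ k a b (n - k) a' b' • (c k a b x * d (n - k) a' b' x)
      else 0

/-- The superfield `Φ = X + θ₋ ψ₊ + θ₊ ψ₋ + θ₋θ₊ F + z G + z θ₋ χ₊ + z θ₊ χ₋ + z θ₋θ₊ Y`. -/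
def mkPhi {A : Type*} [NormedRing A] [NormedAlgebra ℝ A]
    (X ψp ψm F G χp χm Y : E2 → A) : SF A := fun k a b =>
  match k, a, b with
  | 0, false, false => X
  | 0, true,  false => ψp
  | 0, false, true  => ψm
  | 0, true,  true  => F
  | 1, false, false => G
  | 1, true,  false => χp
  | 1, false, true  => χm
  | 1, true,  true  => Y
  | _, _, _ => 0

/-- Left multiplication of a superfield by a constant `ε ∈ A` of `ℤ₂²`-degree `γ`:
`ε · z^k θ₋^a θ₊^b f = (-1)^{⟨γ, mdeg k a b⟩} z^k θ₋^a θ₊^b (ε f)`. -/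
def Cmul {A : Type*} [NormedRing A] [NormedAlgebra ℝ A] (γ : G2) (ε : A) (c : SF A) : SF A :=
  fun k a b p => ksign (ip γ (mdeg k a b)) • (ε * c k a b p)

lemma fderiv_mem_closed {A : Type*} [NormedAddCommGroup A] [NormedSpace ℝ A]
    {E : Type*} [NormedAddCommGroup E] [NormedSpace ℝ E]
    (S : Submodule ℝ A) (hS : IsClosed (S : Set A)) {f : E → A}
    (hf : Differentiable ℝ f) (hm : ∀ p, f p ∈ S) (p : E) (v : E) :
    fderiv ℝ f p v ∈ S := by
  have hg : HasDerivAt (fun t : ℝ => f (p + t • v)) (fderiv ℝ f p v) 0 := by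
    have h1 : HasFDerivAt f (fderiv ℝ f p) (p + (0:ℝ) • v) := by
      simpa using (hf (p + (0:ℝ) • v)).hasFDerivAt
    have h2 : HasDerivAt (fun t : ℝ => p + t • v) v 0 := by
      simpa using ((hasDerivAt_id (0:ℝ)).smul_const v).const_add p
    exact h1.comp_hasDerivAt 0 h2
  have := hasDerivAt_iff_tendsto_slope.mp hg
  refine hS.mem_of_tendsto this ?_
  filter_upwards [self_mem_nhdsWithin] with t ht
  simp only [slope_def_module]
  exact S.smul_mem _ (S.sub_mem (hm _) (hm _))

open SF in
/-- The component Lagrangian of the free `ℤ₂²`-graded exotic scalar field theory: for a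
degree-`(1,1)` superfield `Ψ = Y + θ₋χ₊ + θ₊χ₋ + θ₋θ₊G`, the coefficient of `θ₋θ₊` in
the `z`-degree-zero part of `D₋Ψ·D₊Ψ` equals
`−¼∂₋Y∂₊Y + ½χ₋∂₋χ₋ + ½χ₊∂₊χ₊ + G²`; the exotic boson `Y` propagates and the ordinary
boson `G` is auxiliary. -/
theorem exotic_scalar_field_component_lagrangian
    {A : Type*} [NormedRing A] [NormedAlgebra ℝ A] [CompleteSpace A]
    (𝒜 : G2 → Submodule ℝ A)
    (hK : ∀ γ γ' (u v : A), u ∈ 𝒜 γ → v ∈ 𝒜 γ' → u * v = ksign (ip γ γ') • (v * u))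
    (hCl : ∀ γ, IsClosed (𝒜 γ : Set A))
    (Y χp χm G : E2 → A)
    (hYs : ContDiff ℝ (⊤ : ℕ∞) Y) (hχps : ContDiff ℝ (⊤ : ℕ∞) χp)
    (hχms : ContDiff ℝ (⊤ : ℕ∞) χm) (hGs : ContDiff ℝ (⊤ : ℕ∞) G)
    (hYd : ∀ p, Y p ∈ 𝒜 (1, 1)) (hχpd : ∀ p, χp p ∈ 𝒜 (1, 0))
    (hχmd : ∀ p, χm p ∈ 𝒜 (0, 1)) (hGd : ∀ p, G p ∈ 𝒜 (0, 0)) :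
    SF.mul (1, 0) (Dm (mkPhi Y χp χm G 0 0 0 0)) (Dp (mkPhi Y χp χm G 0 0 0 0)) 0 true true =
      fun p => -((1/4 : ℝ) • (pdm Y p * pdp Y p)) + (1/2 : ℝ) • (χm p * pdm χm p) +
        (1/2 : ℝ) • (χp p * pdp χp p) + G p * G p := by
  funext p
  have hcomm : pdm χm p * χm p = -(χm p * pdm χm p) := by
    have h := hK (0,1) (0,1) (pdm χm p) (χm p)
      (fderiv_mem_closed _ (hCl (0,1)) (hχms.differentiable (by norm_num)) hχmd p (1,0))
      (hχmd p)
    rw [h]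
    norm_num [ksign, ip]
  simp only [SF.mul, Finset.sum_range_one, Fintype.sum_bool, Nat.sub_self]
  norm_num [koz, ksign, ip, mdeg, bz, SF.Dm, SF.Dp, SF.Dthm, SF.Dthp, SF.Mthm, SF.Mthp,
    SF.Pm, SF.Pp, SF.Pz, mkPhi, Pi.add_apply, Pi.sub_apply, Pi.smul_apply]
  rw [hcomm]
  module
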